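/- arXiv:quant-ph/0212019 — 4 statements merged into one kernel-verified Lean document; each statement's English description precedes it below -/
import Mathlib

section
/- For probability distributions p and q on Fin d, q is majorized by p if and only if q can be obtained from p by a finite convex combination of permutations, i.e., there exist weights α_j ≥ 0 summing to 1 and permutations σ_j of Fin d such that q(i) = Σ_j α_j · p(σ_j(i)) for all i. -/
open Finset

section Aux

variable {d : ℕ}

/-- The first `m` indices of `Fin d`. -/
def front (d m : ℕ) : Finset (Fin d) := univ.filter (fun i => (i : ℕ) < m)

@[simp] lemma mem_front {m : ℕ} {i : Fin d} : i ∈ front d m ↔ (i : ℕ) < m := by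
  simp [front]

lemma card_front_le (m : ℕ) : (front d m).card ≤ m := by
  classical
  have : ∀ i ∈ front d m, (i : ℕ) ∈ Finset.range m := by simp
  calc (front d m).card ≤ (Finset.range m).card :=
        Finset.card_le_card_of_injOn (fun i => (i : ℕ)) this
          (fun a _ b _ h => Fin.ext h)
    _ = m := Finset.card_range m

lemma strictMono_le_val {c : ℕ} {g : Fin c → Fin d} (hg : StrictMono g) (j : Fin c) :
    (j : ℕ) ≤ (g j : ℕ) := by
  obtain ⟨jv, hjv⟩ := j
  induction jv with
  | zero => exact Nat.zero_le _
  | succ n ih =>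
    have hn : n < c := by omega
    have hlt : (⟨n, hn⟩ : Fin c) < ⟨n+1, hjv⟩ := by simp [Fin.lt_def]
    have h1 := Fin.lt_iff_val_lt_val.mp (hg hlt)
    have h2 := ih hn
    simp only at h1 h2 ⊢
    omega

/-- For an antitone `f`, the sum over any set is at most the sum over the initial
segment of the same cardinality. -/
lemma sum_le_sum_front {f : Fin d → ℝ} (hf : Antitone f) (u : Finset (Fin d)) (m : ℕ)
    (hcard : u.card = (front d m).card) :
    ∑ i ∈ u, f i ≤ ∑ i ∈ front d m, f i := by
  classical
  set c := u.card with hc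
  have hcd : c ≤ d := by
    rw [hc]; simpa using Finset.card_le_card (Finset.subset_univ u)
  have hcm : c ≤ m := hcard ▸ card_front_le m
  -- the initial segment is the image of j ↦ ⟨j, _⟩
  have hmem : ∀ j : Fin c, (⟨(j : ℕ), lt_of_lt_of_le j.2 hcd⟩ : Fin d) ∈ front d m := by
    intro j; simp [lt_of_lt_of_le j.2 hcm]
  have hfront : (fun j : Fin c => (⟨(j : ℕ), lt_of_lt_of_le j.2 hcd⟩ : Fin d))
      = (front d m).orderEmbOfFin hcard.symm := by
    apply Finset.orderEmbOfFin_unique hcard.symm hmem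
    intro a b hab; exact Fin.mk_lt_mk.mpr hab
  have hu : ∑ i ∈ u, f i = ∑ j : Fin c, f (u.orderEmbOfFin rfl j) := by
    refine (Finset.sum_bij (fun (j : Fin c) _ => u.orderEmbOfFin rfl j) ?_ ?_ ?_ ?_).symm
    · intro a _; exact Finset.orderEmbOfFin_mem u rfl a
    · intro a _ b _ h; exact (u.orderEmbOfFin rfl).injective h
    · intro b hb
      have : b ∈ Set.range (u.orderEmbOfFin rfl) := by
        rw [Finset.range_orderEmbOfFin]; exact hb
      obtain ⟨j, hj⟩ := this
      exact ⟨j, Finset.mem_univ j, hj⟩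
    · intros; rfl
  have hfr : ∑ i ∈ front d m, f i = ∑ j : Fin c, f ⟨(j : ℕ), lt_of_lt_of_le j.2 hcd⟩ := by
    refine (Finset.sum_bij (fun (j : Fin c) _ => ((front d m).orderEmbOfFin hcard.symm j)) ?_ ?_ ?_ ?_).symm
    · intro a _; exact Finset.orderEmbOfFin_mem _ _ a
    · intro a _ b _ h; exact ((front d m).orderEmbOfFin hcard.symm).injective h
    · intro b hb
      have : b ∈ Set.range ((front d m).orderEmbOfFin hcard.symm) := by
        rw [Finset.range_orderEmbOfFin]; exact hb
      obtain ⟨j, hj⟩ := this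
      exact ⟨j, Finset.mem_univ j, hj⟩
    · intro j _; exact (congrFun hfront j).symm ▸ rfl
  rw [hu, hfr]
  apply Finset.sum_le_sum
  intro j _
  apply hf
  have := strictMono_le_val (u.orderEmbOfFin rfl).strictMono j
  exact Fin.le_def.mpr this

lemma front_succ (a : Fin d) : front d ((a : ℕ) + 1) = insert a (front d (a : ℕ)) := by
  ext i
  simp only [mem_front, Finset.mem_insert, Fin.ext_iff]
  omega

/-- `q` is a convex combination of permutations of `p`, weights indexed by all perms. -/
def PRep (p q : Fin d → ℝ) : Prop :=
  ∃ w : Equiv.Perm (Fin d) → ℝ, (∀ σ, 0 ≤ w σ) ∧ ∑ σ, w σ = 1 ∧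
    ∀ i, q i = ∑ σ, w σ * p (σ i)

lemma rep_refl (p : Fin d → ℝ) : PRep p p := by
  classical
  refine ⟨fun σ => if σ = 1 then 1 else 0, by intro σ; positivity, by simp, ?_⟩
  intro i
  rw [Finset.sum_eq_single 1]
  · simp
  · intro b _ hb; simp [hb]
  · simp

lemma rep_comp (p q : Fin d → ℝ) (π ρ : Equiv.Perm (Fin d))
    (h : PRep (p ∘ π) (q ∘ ρ)) : PRep p q := by
  classical
  obtain ⟨w, hw0, hw1, hwq⟩ := h
  let e : Equiv.Perm (Fin d) ≃ Equiv.Perm (Fin d) :=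
    (Equiv.mulRight ρ).trans (Equiv.mulLeft π⁻¹)
  refine ⟨fun σ => w (e σ), fun σ => hw0 _, ?_, ?_⟩
  · rw [Equiv.sum_comp e w]; exact hw1
  · intro i
    have := hwq (ρ⁻¹ i)
    simp only [Function.comp_apply, Equiv.Perm.coe_inv, Equiv.apply_symm_apply] at this
    rw [this]
    refine (Fintype.sum_equiv e.symm _ _ ?_)
    intro σ
    simp only [e, Equiv.symm_trans_apply, Equiv.coe_mulLeft, Equiv.coe_mulRight,
      Equiv.mulLeft_symm, Equiv.mulRight_symm]
    congr 2
    simp [Equiv.Perm.mul_apply]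

lemma rep_convex (p q r : Fin d → ℝ) (τ : Equiv.Perm (Fin d)) (a b : ℝ)
    (ha : 0 ≤ a) (hb : 0 ≤ b) (hab : a + b = 1)
    (hr : ∀ i, r i = a * p i + b * p (τ i)) (h : PRep r q) : PRep p q := by
  classical
  obtain ⟨w, hw0, hw1, hwq⟩ := h
  refine ⟨fun σ => a * w σ + b * w (τ⁻¹ * σ), ?_, ?_, ?_⟩
  · intro σ; have := hw0 σ; have := hw0 (τ⁻¹ * σ); positivity
  · rw [Finset.sum_add_distrib, ← Finset.mul_sum, ← Finset.mul_sum]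
    have : ∑ σ : Equiv.Perm (Fin d), w (τ⁻¹ * σ) = 1 := by
      rw [← hw1]
      exact Fintype.sum_equiv (Equiv.mulLeft τ⁻¹) _ _ (fun σ => rfl)
    rw [this, hw1, mul_one, mul_one, hab]
  · intro i
    rw [hwq i]
    have expand : ∀ σ : Equiv.Perm (Fin d),
        w σ * r (σ i) = a * (w σ * p (σ i)) + b * (w σ * p ((τ * σ) i)) := by
      intro σ; rw [hr (σ i)]; simp [Equiv.Perm.mul_apply]; ring
    rw [Finset.sum_congr rfl (fun σ _ => expand σ), Finset.sum_add_distrib]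
    have h2 : ∑ σ : Equiv.Perm (Fin d), b * (w σ * p ((τ * σ) i))
        = ∑ σ : Equiv.Perm (Fin d), b * (w (τ⁻¹ * σ) * p (σ i)) := by
      refine Fintype.sum_equiv (Equiv.mulLeft τ) _ _ ?_
      intro σ
      simp [Equiv.coe_mulLeft, mul_assoc]
    rw [h2, ← Finset.sum_add_distrib]
    congr 1; ext σ; ring

lemma core (N : ℕ) : ∀ (p q : Fin d → ℝ), Antitone p → Antitone q →
    (∑ i, p i = ∑ i, q i) →
    (∀ m : ℕ, ∑ i ∈ front d m, q i ≤ ∑ i ∈ front d m, p i) →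
    (univ.filter (fun i => p i ≠ q i)).card ≤ N → PRep p q := by
  classical
  induction N with
  | zero =>
    intro p q hp hq hsum H hcard
    have : univ.filter (fun i => p i ≠ q i) = ∅ := Finset.card_eq_zero.mp (Nat.le_zero.mp hcard)
    have heq : ∀ i, p i = q i := by
      intro i
      by_contra hne
      have hmem : i ∈ univ.filter (fun i => p i ≠ q i) :=
        Finset.mem_filter.mpr ⟨Finset.mem_univ i, hne⟩
      rw [this] at hmem
      exact Finset.notMem_empty i hmem
    have : p = q := funext heq
    exact this ▸ rep_refl p
  | succ N ih =>
    intro p q hp hq hsum H hcard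
    by_cases hpq : p = q
    · exact hpq ▸ rep_refl p
    -- there is an index where q exceeds p
    have hex : ∃ k, p k < q k := by
      by_contra hc
      push_neg at hc
      apply hpq
      funext i
      have hsum0 : ∑ i, (p i - q i) = 0 := by
        rw [Finset.sum_sub_distrib, hsum, sub_self]
      have := (Finset.sum_eq_zero_iff_of_nonneg
        (fun i _ => sub_nonneg.mpr (hc i))).mp hsum0 i (Finset.mem_univ i)
      linarith
    set K : Finset (Fin d) := univ.filter (fun k => p k < q k) with hKdef
    have hKne : K.Nonempty := by
      obtain ⟨k, hk⟩ := hex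
      exact ⟨k, Finset.mem_filter.mpr ⟨Finset.mem_univ k, hk⟩⟩
    set k := K.min' hKne with hkdef
    have hk : p k < q k := (Finset.mem_filter.mp (K.min'_mem hKne)).2
    have hkmin : ∀ i, i < k → ¬ (p i < q i) := by
      intro i hik hqi
      have : k ≤ i := K.min'_le i (Finset.mem_filter.mpr ⟨Finset.mem_univ i, hqi⟩)
      exact absurd this (not_le.mpr hik)
    -- j : largest index below k where p exceeds q
    have hexj : ∃ j, j < k ∧ q j < p j := by
      by_contra hc
      push_neg at hc
      have heq : ∀ i, i < k → p i = q i := by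
        intro i hik
        exact le_antisymm (hc i hik) (not_lt.mp (hkmin i hik))
      have hH := H ((k : ℕ) + 1)
      rw [front_succ k, Finset.sum_insert (by simp), Finset.sum_insert (by simp)] at hH
      have heqsum : ∑ i ∈ front d (k : ℕ), p i = ∑ i ∈ front d (k : ℕ), q i := by
        refine Finset.sum_congr rfl (fun i hi => heq i ?_)
        rw [Fin.lt_def]
        exact mem_front.mp hi
      linarith
    set J : Finset (Fin d) := univ.filter (fun j => j < k ∧ q j < p j) with hJdef
    have hJne : J.Nonempty := by
      obtain ⟨j, h1, h2⟩ := hexj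
      exact ⟨j, Finset.mem_filter.mpr ⟨Finset.mem_univ j, h1, h2⟩⟩
    set j := J.max' hJne with hjdef
    have hjmem := J.max'_mem hJne
    have hjk : j < k := (Finset.mem_filter.mp hjmem).2.1
    have hj2 : q j < p j := (Finset.mem_filter.mp hjmem).2.2
    have hjmax : ∀ i, j < i → i < k → p i = q i := by
      intro i h1 h2
      rcases lt_trichotomy (p i) (q i) with h | h | h
      · exact absurd h (hkmin i h2)
      · exact h
      · have : i ≤ j := J.le_max' i (by simp [hJdef, h, h2])
        exact absurd this (not_le.mpr h1)
    have hqjk : q k ≤ q j := hq (le_of_lt hjk)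
    set δ := min (p j - q j) (q k - p k) with hδdef
    have hδpos : 0 < δ := lt_min (by linarith) (by linarith)
    have hδ1 : δ ≤ p j - q j := min_le_left _ _
    have hδ2 : δ ≤ q k - p k := min_le_right _ _
    have c1 : p k + δ ≤ q k := by linarith
    have c3 : q j ≤ p j - δ := by linarith
    have hjkne : j ≠ k := ne_of_lt hjk
    set p' : Fin d → ℝ :=
      fun i => p i + (if i = k then δ else 0) - (if i = j then δ else 0) with hp'def
    have hp'j : p' j = p j - δ := by simp [hp'def, hjkne]
    have hp'k : p' k = p k + δ := by simp [hp'def, hjkne.symm]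
    have hp'o : ∀ i, i ≠ j → i ≠ k → p' i = p i := by
      intro i h1 h2; simp [hp'def, h1, h2]
    -- p' is antitone
    have hp' : Antitone p' := by
      intro a b hab
      by_cases hbj : b = j
      · subst hbj
        by_cases haj : a = j
        · subst haj; exact le_refl _
        · have haltj : a < j := lt_of_le_of_ne hab haj
          have hak : a ≠ k := ne_of_lt (lt_trans haltj hjk)
          rw [hp'o a haj hak, hp'j]
          have := hp (le_of_lt haltj)
          linarith
      by_cases hbk : b = k
      · subst hbk
        by_cases haj : a = j
        · subst haj; rw [hp'j, hp'k]; linarith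
        by_cases hak : a = k
        · subst hak; exact le_refl _
        · rw [hp'o a haj hak, hp'k]
          rcases lt_or_gt_of_ne haj with h | h
          · have := hp (le_of_lt h)  -- p j ≤ p a
            linarith
          · have halt : a < k := lt_of_le_of_ne hab hak
            have := hjmax a h halt
            have := hq (le_of_lt halt)  -- q k ≤ q a
            linarith
      by_cases haj : a = j
      · subst haj
        have hjb : j < b := lt_of_le_of_ne hab (Ne.symm hbj)
        rw [hp'o b hbj hbk, hp'j]
        rcases lt_trichotomy b k with h | h | h
        · have := hjmax b hjb h
          have := hq (le_of_lt hjb)  -- q b ≤ q j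
          linarith
        · exact absurd h hbk
        · have := hp (le_of_lt h)  -- p b ≤ p k
          linarith
      by_cases hak : a = k
      · subst hak
        rw [hp'o b hbj hbk, hp'k]
        have := hp hab  -- p b ≤ p k
        linarith
      · rw [hp'o a haj hak, hp'o b hbj hbk]
        exact hp hab
    -- sums over fronts for p'
    have hfs : ∀ s : Finset (Fin d), ∑ i ∈ s, p' i =
        ∑ i ∈ s, p i + (if k ∈ s then δ else 0) - (if j ∈ s then δ else 0) := by
      intro s
      simp only [hp'def]
      rw [Finset.sum_sub_distrib, Finset.sum_add_distrib,
        Finset.sum_ite_eq' s k (fun _ => δ), Finset.sum_ite_eq' s j (fun _ => δ)]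
    have hsum' : ∑ i, p' i = ∑ i, q i := by
      rw [hfs univ]
      simp [hsum]
    have H' : ∀ m : ℕ, ∑ i ∈ front d m, q i ≤ ∑ i ∈ front d m, p' i := by
      intro m
      rw [hfs (front d m)]
      by_cases hjm : (j : ℕ) < m
      · by_cases hkm : (k : ℕ) < m
        · simp only [mem_front, hjm, hkm, if_true]
          linarith [H m]
        · simp only [mem_front, hjm, hkm, if_true, if_false]
          -- need : ∑ q ≤ ∑ p - δ over front m
          have key : ∑ i ∈ front d m, (p i - q i) = ∑ i ∈ front d ((j : ℕ) + 1), (p i - q i) := by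
            symm
            apply Finset.sum_subset
            · intro i hi
              simp only [mem_front] at hi ⊢
              omega
            · intro i hi hni
              simp only [mem_front] at hi hni
              have h1 : j < i := by rw [Fin.lt_def]; omega
              have h2 : i < k := by
                rw [Fin.lt_def]
                have : (k : ℕ) ≥ m := not_lt.mp hkm
                omega
              rw [hjmax i h1 h2]; ring
          have hsplit : ∑ i ∈ front d ((j : ℕ) + 1), (p i - q i)
              = (p j - q j) + ∑ i ∈ front d (j : ℕ), (p i - q i) := by
            rw [front_succ j, Finset.sum_insert (by simp)]
          have hHj := H (j : ℕ)
          have h4 : ∑ i ∈ front d (j : ℕ), (p i - q i) ≥ 0 := by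
            rw [Finset.sum_sub_distrib]; linarith
          have h5 : ∑ i ∈ front d m, (p i - q i)
              = ∑ i ∈ front d m, p i - ∑ i ∈ front d m, q i := Finset.sum_sub_distrib _ _
          linarith
      · have hkm : ¬ ((k : ℕ) < m) := by
          have := Fin.lt_def.mp hjk
          omega
        simp only [mem_front, hjm, hkm, if_false]
        linarith [H m]
    -- the difference set strictly decreases
    set D := univ.filter (fun i => p i ≠ q i) with hDdef
    set D' := univ.filter (fun i => p' i ≠ q i) with hD'def
    have hDsub : D' ⊆ D := by
      intro i hi
      simp only [hD'def, hDdef, Finset.mem_filter, Finset.mem_univ, true_and] at hi ⊢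
      by_contra h
      by_cases h1 : i = j
      · subst h1; exact absurd h (ne_of_gt hj2)
      by_cases h2 : i = k
      · subst h2; exact absurd h (ne_of_lt hk)
      · rw [hp'o i h1 h2] at hi; exact hi h
    have hwit : ∃ x, x ∈ D ∧ x ∉ D' := by
      rcases min_cases (p j - q j) (q k - p k) with ⟨h1, _⟩ | ⟨h1, _⟩
      · refine ⟨j, ?_, ?_⟩
        · simp [hDdef, ne_of_gt hj2]
        · simp only [hD'def, Finset.mem_filter, Finset.mem_univ, true_and, not_not]
          rw [hp'j, hδdef, h1]; ring
      · refine ⟨k, ?_, ?_⟩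
        · simp [hDdef, ne_of_lt hk]
        · simp only [hD'def, Finset.mem_filter, Finset.mem_univ, true_and, not_not]
          rw [hp'k, hδdef, h1]; ring
    have hss : D' ⊂ D := by
      obtain ⟨x, hx1, hx2⟩ := hwit
      exact Finset.ssubset_iff_of_subset hDsub |>.mpr ⟨x, hx1, hx2⟩
    have hcard' : D'.card ≤ N := by
      have := Finset.card_lt_card hss
      omega
    have hrep' : PRep p' q := ih p' q hp' hq hsum' H' hcard'
    -- p' is a convex combination of p and p ∘ swap j k
    have hpjk : p k < p j := by linarith
    set t := δ / (p j - p k) with htdef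
    have hne : p j - p k ≠ 0 := by linarith
    have ht0 : 0 ≤ t := div_nonneg (le_of_lt hδpos) (by linarith)
    have ht1 : t ≤ 1 := by
      rw [htdef, div_le_one (by linarith)]
      linarith
    have htδ : t * (p j - p k) = δ := div_mul_cancel₀ δ hne
    refine rep_convex p q p' (Equiv.swap j k) (1 - t) t (by linarith) ht0 (by ring) ?_ hrep'
    intro i
    by_cases h1 : i = j
    · subst h1
      rw [hp'j, Equiv.swap_apply_left]
      nlinarith [htδ]
    by_cases h2 : i = k
    · subst h2
      rw [hp'k, Equiv.swap_apply_right]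
      nlinarith [htδ]
    · rw [hp'o i h1 h2, Equiv.swap_apply_of_ne_of_ne h1 h2]
      ring

end Aux

/-- `p` is a probability distribution on `Fin d`. -/
def IsProbDist {d : ℕ} (p : Fin d → ℝ) : Prop :=
  (∀ i, 0 ≤ p i) ∧ ∑ i, p i = 1

/-- `q` is majorized by `p`: for every `k`, the sum of the `k` largest values of `q`
is at most the sum of the `k` largest values of `p`, expressed as: for every subset `s`,
there is a subset `t` of the same cardinality with `∑_s q ≤ ∑_t p`. -/
def MajorizedBy {d : ℕ} (q p : Fin d → ℝ) : Prop :=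
  ∀ s : Finset (Fin d), ∃ t : Finset (Fin d), t.card = s.card ∧ ∑ i ∈ s, q i ≤ ∑ i ∈ t, p i

theorem majorized_iff_convex_combination_of_permutations
    {d : ℕ} (p q : Fin d → ℝ) (hp : IsProbDist p) (hq : IsProbDist q) :
    MajorizedBy q p ↔
      ∃ (m : ℕ) (α : Fin m → ℝ) (σ : Fin m → Equiv.Perm (Fin d)),
        (∀ j, 0 ≤ α j) ∧ (∑ j, α j = 1) ∧
        ∀ i, q i = ∑ j, α j * p (σ j i) := by
  classical
  constructor
  · -- hard direction: Hardy–Littlewood–Pólya via T-transforms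
    intro hmaj
    obtain ⟨-, hpsum⟩ := hp
    obtain ⟨-, hqsum⟩ := hq
    -- sort p and q into antitone order
    set σp := Tuple.sort (fun i => -p i) with hσp
    set σq := Tuple.sort (fun i => -q i) with hσq
    set p₀ : Fin d → ℝ := p ∘ σp with hp₀
    set q₀ : Fin d → ℝ := q ∘ σq with hq₀
    have hpa : Antitone p₀ := by
      intro a b hab
      have := Tuple.monotone_sort (fun i => -p i) hab
      simpa [hp₀] using this
    have hqa : Antitone q₀ := by
      intro a b hab
      have := Tuple.monotone_sort (fun i => -q i) hab
      simpa [hq₀] using this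
    have hps : ∑ i, p₀ i = ∑ i, p i := Equiv.sum_comp σp p
    have hqs : ∑ i, q₀ i = ∑ i, q i := Equiv.sum_comp σq q
    have H : ∀ m : ℕ, ∑ i ∈ front d m, q₀ i ≤ ∑ i ∈ front d m, p₀ i := by
      intro m
      have h1 : ∑ i ∈ front d m, q₀ i = ∑ i ∈ (front d m).image σq, q i := by
        rw [Finset.sum_image (fun a _ b _ hab => σq.injective hab)]
        rfl
      obtain ⟨t, htc, hle⟩ := hmaj ((front d m).image σq)
      have h2 : ∑ i ∈ t, p i = ∑ i ∈ t.image σp.symm, p₀ i := by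
        rw [Finset.sum_image (fun a _ b _ hab => σp.symm.injective hab)]
        refine Finset.sum_congr rfl (fun i _ => ?_)
        simp [hp₀]
      have h3 : (t.image σp.symm).card = (front d m).card := by
        rw [Finset.card_image_of_injective _ σp.symm.injective, htc,
          Finset.card_image_of_injective _ σq.injective]
      have h4 := sum_le_sum_front hpa (t.image σp.symm) m h3
      rw [h1]
      calc ∑ i ∈ (front d m).image σq, q i ≤ ∑ i ∈ t, p i := hle
        _ = ∑ i ∈ t.image σp.symm, p₀ i := h2
        _ ≤ ∑ i ∈ front d m, p₀ i := h4
    have hrep₀ : PRep p₀ q₀ :=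
      core _ p₀ q₀ hpa hqa (by rw [hps, hqs, hpsum, hqsum]) H le_rfl
    have hrep : PRep p q := rep_comp p q σp σq hrep₀
    obtain ⟨w, hw0, hw1, hwq⟩ := hrep
    set e := (Fintype.equivFin (Equiv.Perm (Fin d))).symm with he
    refine ⟨Fintype.card (Equiv.Perm (Fin d)), fun j => w (e j), fun j => e j,
      fun j => hw0 _, ?_, ?_⟩
    · rw [Equiv.sum_comp e w]; exact hw1
    · intro i
      rw [hwq i, ← Equiv.sum_comp e (fun σ => w σ * p (σ i))]
  · -- easy direction
    intro h
    obtain ⟨m, α, σs, h0, h1, hval⟩ := h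
    intro s
    have hPne : (Finset.powersetCard s.card (univ : Finset (Fin d))).Nonempty :=
      ⟨s, Finset.mem_powersetCard.mpr ⟨Finset.subset_univ s, rfl⟩⟩
    obtain ⟨t, htP, htmax⟩ := Finset.exists_max_image _ (fun t => ∑ i ∈ t, p i) hPne
    obtain ⟨-, htcard⟩ := Finset.mem_powersetCard.mp htP
    refine ⟨t, htcard, ?_⟩
    have hstep : ∑ i ∈ s, q i = ∑ j, α j * ∑ i ∈ s, p (σs j i) := by
      rw [Finset.sum_congr rfl (fun i _ => hval i), Finset.sum_comm]
      exact Finset.sum_congr rfl (fun j _ => (Finset.mul_sum _ _ _).symm)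
    rw [hstep]
    have hbound : ∀ j, ∑ i ∈ s, p (σs j i) ≤ ∑ i ∈ t, p i := by
      intro j
      have himg : ∑ i ∈ s, p (σs j i) = ∑ i ∈ s.image (σs j), p i := by
        rw [Finset.sum_image (fun a _ b _ hab => (σs j).injective hab)]
      rw [himg]
      apply htmax
      refine Finset.mem_powersetCard.mpr ⟨Finset.subset_univ _, ?_⟩
      rw [Finset.card_image_of_injective _ (σs j).injective]
    calc ∑ j, α j * ∑ i ∈ s, p (σs j i) ≤ ∑ j, α j * ∑ i ∈ t, p i := by
          exact Finset.sum_le_sum (fun j _ => mul_le_mul_of_nonneg_left (hbound j) (h0 j))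
      _ = ∑ i ∈ t, p i := by rw [← Finset.sum_mul, h1, one_mul]
end

section
/- For any probability distribution q on Fin d majorized by p, and any ε > 0, there exists N, a permutation π of Fin (d·N), such that the distribution obtained by tensoring p with the uniform distribution on Fin N, permuting by π, and marginalizing over the Fin N factor, is within total variation distance ε of q. -/
open Finset

/-- A strictly monotone map `Fin m → Fin d` grows at least as the identity. -/
lemma my_strictMono_le_apply {m d : ℕ} {g : Fin m → Fin d} (hg : StrictMono g) :
    ∀ n : ℕ, ∀ k : Fin m, (k : ℕ) = n → n ≤ (g k : ℕ) := by
  intro n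
  induction n with
  | zero => intro k _; exact Nat.zero_le _
  | succ n ih =>
    intro k hk
    have hn : n < m := by omega
    have hlt : (⟨n, hn⟩ : Fin m) < k := by
      simp [Fin.lt_def, hk]
    have h1 : n ≤ (g ⟨n, hn⟩ : ℕ) := ih ⟨n, hn⟩ rfl
    have h2 : g ⟨n, hn⟩ < g k := hg hlt
    have := Fin.lt_def.mp h2
    omega

/-- The sum of an antitone function over any finset is at most the sum over the
initial segment of the same size. -/
lemma my_sum_le_sorted_top {d : ℕ} {f : Fin d → ℝ} (hf : Antitone f) (u : Finset (Fin d)) :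
    ∑ i ∈ u, f i ≤ ∑ j ∈ range u.card, (if h : j < d then f ⟨j, h⟩ else 0) := by
  have hmd : u.card ≤ d := by
    simpa using Finset.card_le_univ u
  set m := u.card with hm
  have e := u.orderIsoOfFin hm.symm
  have hg : StrictMono (fun k : Fin m => ((e k : Fin d))) := fun a b hab => by
    exact_mod_cast e.strictMono hab
  have h1 : ∑ i ∈ u, f i = ∑ k : Fin m, f (e k) := by
    rw [← Finset.sum_attach u f]
    exact (Equiv.sum_comp e.toEquiv (fun x => f x)).symm
  have h2 : ∑ j ∈ range m, (if h : j < d then f ⟨j, h⟩ else 0)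
      = ∑ k : Fin m, f ⟨(k : ℕ), lt_of_lt_of_le k.isLt hmd⟩ := by
    rw [← Fin.sum_univ_eq_sum_range (fun j => if h : j < d then f ⟨j, h⟩ else 0) m]
    refine Finset.sum_congr rfl fun k _ => ?_
    rw [dif_pos (lt_of_lt_of_le k.isLt hmd)]
  rw [h1, h2]
  refine Finset.sum_le_sum fun k _ => ?_
  refine hf ?_
  have := my_strictMono_le_apply hg (k : ℕ) k rfl
  exact Fin.mk_le_of_le_val this

/-- Abel-summation comparison: if `a` is antitone, partial sums of `gq` are dominated by
those of `gp`, and the total sums agree, then the `a`-weighted sum of `gq` is at most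
that of `gp`. -/
lemma my_abel_compare (n : ℕ) (a gq gp : ℕ → ℝ)
    (ha : ∀ k, k + 1 < n → a (k + 1) ≤ a k)
    (hB : ∀ k, k < n → ∑ j ∈ range (k + 1), gq j ≤ ∑ j ∈ range (k + 1), gp j)
    (htot : ∑ j ∈ range n, gq j = ∑ j ∈ range n, gp j) :
    ∑ k ∈ range n, a k * gq k ≤ ∑ k ∈ range n, a k * gp k := by
  have hq := Finset.sum_range_by_parts a gq n
  have hp := Finset.sum_range_by_parts a gp n
  simp only [smul_eq_mul] at hq hp
  rw [hq, hp, htot]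
  refine sub_le_sub_left ?_ _
  refine Finset.sum_le_sum fun i hi => ?_
  rw [Finset.mem_range] at hi
  have hi' : i + 1 < n := by omega
  have h1 : a (i + 1) - a i ≤ 0 := by
    have := ha i hi'
    linarith
  have h2 : ∑ j ∈ range (i + 1), gq j ≤ ∑ j ∈ range (i + 1), gp j := hB i (by omega)
  exact mul_le_mul_of_nonpos_left h2 h1

/-- Every real tuple can be sorted into decreasing order by a permutation. -/
lemma my_exists_antitone_perm {d : ℕ} (f : Fin d → ℝ) :
    ∃ σ : Equiv.Perm (Fin d), Antitone (f ∘ σ) := by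
  refine ⟨Tuple.sort (fun i => -f i), fun i j hij => ?_⟩
  have := Tuple.monotone_sort (fun i => -f i) hij
  simpa using this

open Finset

/-- Rado's theorem: a distribution majorized by `p` lies in the convex hull of the
orbit of `p` under permutations. -/
lemma my_rado {d : ℕ} (p q : Fin d → ℝ) (hp : IsProbDist p) (hq : IsProbDist q)
    (hmaj : MajorizedBy q p) :
    q ∈ convexHull ℝ (Set.range fun σ : Equiv.Perm (Fin d) => p ∘ σ) := by
  by_contra hqn
  set S := convexHull ℝ (Set.range fun σ : Equiv.Perm (Fin d) => p ∘ σ) with hS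
  have hconv : Convex ℝ S := convex_convexHull _ _
  have hcl : IsClosed S := (Set.Finite.isCompact_convexHull (𝕜 := ℝ) (Set.finite_range _)).isClosed
  obtain ⟨f, u, hqu, hub⟩ := geometric_hahn_banach_point_closed hconv hcl hqn
  -- the linear functional as a vector
  set c : Fin d → ℝ := fun i => -(f (fun j => if i = j then (1 : ℝ) else 0)) with hc
  have hf : ∀ x : Fin d → ℝ, f x = -∑ i, c i * x i := by
    intro x
    conv_lhs => rw [pi_eq_sum_univ x]
    rw [map_sum, ← Finset.sum_neg_distrib]
    refine Finset.sum_congr rfl fun i _ => ?_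
    simp only [map_smul, smul_eq_mul, hc]
    ring
  -- sort everything decreasingly
  obtain ⟨σ, hσ⟩ := my_exists_antitone_perm c
  obtain ⟨ρ, hρ⟩ := my_exists_antitone_perm q
  obtain ⟨π, hπ⟩ := my_exists_antitone_perm p
  set a : ℕ → ℝ := fun k => if h : k < d then c (σ ⟨k, h⟩) else 0 with hadef
  set gq : ℕ → ℝ := fun k => if h : k < d then q (ρ ⟨k, h⟩) else 0 with hgq
  set gp : ℕ → ℝ := fun k => if h : k < d then p (π ⟨k, h⟩) else 0 with hgp
  -- Step 1: rearrangement
  have step1 : ∑ i, c i * q i ≤ ∑ k ∈ range d, a k * gq k := by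
    have hmono : Monovary (c ∘ σ) (q ∘ ρ) := hσ.monovary hρ
    have key := hmono.sum_smul_comp_perm_le_sum_smul (σ := σ.trans ρ.symm)
    simp only [smul_eq_mul, Function.comp] at key
    have lhs_eq : ∑ i, c i * q i = ∑ k, c (σ k) * q (ρ ((σ.trans ρ.symm) k)) := by
      rw [← Equiv.sum_comp σ (fun i => c i * q i)]
      refine Finset.sum_congr rfl fun k _ => ?_
      simp
    have rhs_eq : ∑ k, c (σ k) * q (ρ k) = ∑ k ∈ range d, a k * gq k := by
      rw [← Fin.sum_univ_eq_sum_range (fun k => a k * gq k) d]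
      refine Finset.sum_congr rfl fun k _ => ?_
      simp [hadef, hgq, k.isLt]
    rw [lhs_eq, ← rhs_eq]
    exact key
  -- Step 2: Abel comparison
  have step2 : ∑ k ∈ range d, a k * gq k ≤ ∑ k ∈ range d, a k * gp k := by
    refine my_abel_compare d a gq gp ?_ ?_ ?_
    · intro k hk
      have hk' : k < d := by omega
      simp only [hadef, dif_pos hk, dif_pos hk']
      exact hσ (by simp [Fin.le_def])
    · intro k hk
      have hk1 : k + 1 ≤ d := hk
      -- LHS is the sum of q over a set of size k+1
      set s : Finset (Fin d) :=
        Finset.image (fun j : Fin (k + 1) => ρ (Fin.castLE hk1 j)) Finset.univ with hsdef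
      have hinj : Function.Injective (fun j : Fin (k + 1) => ρ (Fin.castLE hk1 j)) := by
        intro x y hxy
        have := ρ.injective hxy
        exact Fin.castLE_injective hk1 this
      have hcards : s.card = k + 1 := by
        rw [hsdef, Finset.card_image_of_injective _ hinj, Finset.card_univ, Fintype.card_fin]
      have hlhs : ∑ j ∈ range (k + 1), gq j = ∑ i ∈ s, q i := by
        rw [hsdef, Finset.sum_image (fun x _ y _ h => hinj h)]
        rw [← Fin.sum_univ_eq_sum_range gq (k + 1)]
        refine Finset.sum_congr rfl fun j _ => ?_
        have hj : (j : ℕ) < d := lt_of_lt_of_le j.isLt hk1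
        simp only [hgq, dif_pos hj]
        congr 1
      obtain ⟨t, htc, hle⟩ := hmaj s
      have htop : ∑ i ∈ t, p i ≤ ∑ j ∈ range (k + 1), gp j := by
        have := my_sum_le_sorted_top (f := p ∘ π) (fun i j hij => hπ hij)
          (t.image π.symm)
        have hcard' : (t.image π.symm).card = k + 1 := by
          rw [Finset.card_image_of_injective _ π.symm.injective, htc, hcards]
        rw [hcard'] at this
        have hsum' : ∑ i ∈ t.image π.symm, (p ∘ π) i = ∑ i ∈ t, p i := by
          rw [Finset.sum_image (fun x _ y _ h => π.symm.injective h)]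
          refine Finset.sum_congr rfl fun i _ => ?_
          simp
        rw [hsum'] at this
        refine this.trans (le_of_eq ?_)
        refine Finset.sum_congr rfl fun j hj => ?_
        rw [Finset.mem_range] at hj
        rfl
      rw [hlhs]
      exact hle.trans htop
    · have h1 : ∑ j ∈ range d, gq j = 1 := by
        rw [← Fin.sum_univ_eq_sum_range gq d]
        have : ∑ j : Fin d, gq (j : ℕ) = ∑ j : Fin d, q (ρ j) := by
          refine Finset.sum_congr rfl fun j _ => ?_
          simp [hgq, j.isLt]
        rw [this, Equiv.sum_comp ρ q, hq.2]
      have h2 : ∑ j ∈ range d, gp j = 1 := by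
        rw [← Fin.sum_univ_eq_sum_range gp d]
        have : ∑ j : Fin d, gp (j : ℕ) = ∑ j : Fin d, p (π j) := by
          refine Finset.sum_congr rfl fun j _ => ?_
          simp [hgp, j.isLt]
        rw [this, Equiv.sum_comp π p, hp.2]
      rw [h1, h2]
  -- Step 3: back to a permutation of p
  have step3 : ∑ k ∈ range d, a k * gp k = ∑ i, c i * p (π (σ.symm i)) := by
    rw [← Equiv.sum_comp σ (fun i => c i * p (π (σ.symm i)))]
    rw [← Fin.sum_univ_eq_sum_range (fun k => a k * gp k) d]
    refine Finset.sum_congr rfl fun k _ => ?_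
    simp [hadef, hgp, k.isLt]
  -- derive the contradiction
  have hb : (p ∘ (σ.symm.trans π)) ∈ S := by
    rw [hS]
    exact subset_convexHull _ _ ⟨σ.symm.trans π, rfl⟩
  have hub' := hub _ hb
  have hchain : ∑ i, c i * q i ≤ ∑ i, c i * p (π (σ.symm i)) :=
    step1.trans (step2.trans (le_of_eq step3))
  have hfq : f q = -∑ i, c i * q i := hf q
  have hfb : f (p ∘ (σ.symm.trans π)) = -∑ i, c i * p (π (σ.symm i)) := by
    rw [hf]
    congr 1
  rw [hfq] at hqu
  rw [hfb] at hub'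
  linarith

set_option maxHeartbeats 1000000 in
/-- Any majorization-allowed transition can be realized to arbitrary accuracy by a
noisy operation: tensor with the uniform distribution on `Fin N`, permute, and
marginalize over the `Fin N` factor. -/
theorem noisy_operations_achieve_majorization {d : ℕ} (hd : 0 < d)
    (p q : Fin d → ℝ) (hp : IsProbDist p) (hq : IsProbDist q)
    (hmaj : MajorizedBy q p) (ε : ℝ) (hε : 0 < ε) :
    ∃ (N : ℕ) (_ : 0 < N) (π : Equiv.Perm (Fin d × Fin N)),
      ∑ i : Fin d, |(∑ j : Fin N, p (π.symm (i, j)).1 / N) - q i| ≤ ε := by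
  have hq_hull := my_rado p q hp hq hmaj
  set sF : Finset (Fin d → ℝ) :=
    Finset.image (fun σ : Equiv.Perm (Fin d) => p ∘ σ) Finset.univ with hsF
  have hrange : (Set.range fun σ : Equiv.Perm (Fin d) => p ∘ σ) = ↑sF := by
    rw [hsF, Finset.coe_image, Finset.coe_univ, Set.image_univ]
  rw [hrange, Finset.convexHull_eq] at hq_hull
  obtain ⟨w, hw0, hw1, hwc⟩ := hq_hull
  rw [Finset.centerMass_eq_of_sum_1 _ _ hw1] at hwc
  -- the index type of the convex combination
  have hchoose : ∀ y : {y : Fin d → ℝ // y ∈ sF},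
      ∃ σ : Equiv.Perm (Fin d), p ∘ σ = (y : Fin d → ℝ) := by
    intro y
    obtain ⟨σ, _, hσ⟩ := Finset.mem_image.mp y.2
    exact ⟨σ, hσ⟩
  choose P hP using hchoose
  set W : {y : Fin d → ℝ // y ∈ sF} → ℝ := fun y => w y.1 with hWdef
  have hW0 : ∀ i, 0 ≤ W i := fun i => hw0 _ i.2
  have hW1 : ∑ i, W i = 1 := by
    rw [← hw1]; exact Finset.sum_attach sF w
  have hqW : ∀ i : Fin d, q i = ∑ x, W x * p (P x i) := by
    intro i
    rw [← hwc, Finset.sum_apply, ← Finset.sum_attach sF (fun y => (w y • id y) i)]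
    refine Finset.sum_congr rfl fun x _ => ?_
    have hxi : (x : Fin d → ℝ) i = p (P x i) := by rw [← hP x]; rfl
    rw [Pi.smul_apply, smul_eq_mul, id_eq, hxi]
  -- nonemptiness of the index type
  have hne : (Finset.univ : Finset {y : Fin d → ℝ // y ∈ sF}).Nonempty := by
    by_contra h
    rw [Finset.not_nonempty_iff_eq_empty] at h
    rw [h, Finset.sum_empty] at hW1
    norm_num at hW1
  obtain ⟨i₀, -⟩ := hne
  set m : ℕ := Fintype.card {y : Fin d → ℝ // y ∈ sF} with hm
  -- choose N
  set N : ℕ := max 1 ⌈(2 * m : ℝ) / ε⌉₊ with hNdef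
  have hN0 : 0 < N := lt_of_lt_of_le Nat.one_pos (le_max_left _ _)
  have hNpos : (0 : ℝ) < N := by exact_mod_cast hN0
  have hNε : (2 * m : ℝ) / N ≤ ε := by
    have h1 : (2 * m : ℝ) / ε ≤ (⌈(2 * m : ℝ) / ε⌉₊ : ℝ) := Nat.le_ceil _
    have h2 : ((⌈(2 * m : ℝ) / ε⌉₊ : ℕ) : ℝ) ≤ (N : ℝ) := by
      have h2' : ⌈(2 * m : ℝ) / ε⌉₊ ≤ N := le_max_right 1 _
      exact_mod_cast h2'
    have h3 : (2 * m : ℝ) / ε ≤ N := h1.trans h2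
    rw [div_le_iff₀ hε] at h3
    rw [div_le_iff₀ hNpos]
    nlinarith
  -- integer approximations of the weights
  set R : ℕ := ∑ j ∈ Finset.univ.erase i₀, ⌊W j * N⌋₊ with hRdef
  have hRN : (R : ℝ) ≤ N := by
    have h1 : (R : ℝ) = ∑ j ∈ Finset.univ.erase i₀, (⌊W j * N⌋₊ : ℝ) := by
      push_cast [hRdef]; rfl
    rw [h1]
    have h2 : ∑ j ∈ Finset.univ.erase i₀, (⌊W j * N⌋₊ : ℝ)
        ≤ ∑ j ∈ Finset.univ.erase i₀, W j * N := by
      refine Finset.sum_le_sum fun j _ => Nat.floor_le ?_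
      exact mul_nonneg (hW0 j) hNpos.le
    have h3 : ∑ j ∈ Finset.univ.erase i₀, W j * N ≤ ∑ j, W j * N := by
      refine Finset.sum_le_sum_of_subset_of_nonneg (Finset.erase_subset _ _) ?_
      exact fun j _ _ => mul_nonneg (hW0 j) hNpos.le
    have h4 : ∑ j, W j * N = N := by
      rw [← Finset.sum_mul, hW1, one_mul]
    linarith
  have hRN' : R ≤ N := by exact_mod_cast hRN
  set k : {y : Fin d → ℝ // y ∈ sF} → ℕ :=
    fun i => if i = i₀ then N - R else ⌊W i * N⌋₊ with hkdef
  have hksum : ∑ i, k i = N := by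
    rw [← Finset.add_sum_erase _ k (Finset.mem_univ i₀)]
    have h1 : k i₀ = N - R := by rw [hkdef]; simp
    have h2 : ∑ j ∈ Finset.univ.erase i₀, k j = R := by
      rw [hRdef]
      refine Finset.sum_congr rfl fun j hj => ?_
      rw [hkdef]
      simp [Finset.ne_of_mem_erase hj]
    rw [h1, h2]
    omega
  set δ : {y : Fin d → ℝ // y ∈ sF} → ℝ := fun i => (k i : ℝ) / N - W i with hδdef
  have hδ1 : ∀ i, i ≠ i₀ → |δ i| ≤ 1 / N := by
    intro i hi
    have hki : (k i : ℝ) = (⌊W i * N⌋₊ : ℝ) := by rw [hkdef]; simp [hi]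
    have hfl1 : (⌊W i * N⌋₊ : ℝ) ≤ W i * N := Nat.floor_le (mul_nonneg (hW0 i) hNpos.le)
    have hfl2 : W i * N < (⌊W i * N⌋₊ : ℝ) + 1 := Nat.lt_floor_add_one _
    have heq : δ i = ((k i : ℝ) - W i * N) / N := by
      rw [hδdef]
      field_simp
    rw [heq, abs_div, abs_of_pos hNpos]
    gcongr
    rw [abs_le, hki]
    constructor
    · linarith
    · linarith
  have hsumδ : ∑ j, δ j = 0 := by
    rw [hδdef]
    rw [Finset.sum_sub_distrib, ← Finset.sum_div, hW1]
    have : ∑ j, ((k j : ℕ) : ℝ) = (N : ℝ) := by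
      rw [← Nat.cast_sum, hksum]
    rw [this, div_self hNpos.ne']
    ring
  have hδ0 : δ i₀ = -∑ j ∈ Finset.univ.erase i₀, δ j := by
    rw [← Finset.add_sum_erase _ δ (Finset.mem_univ i₀)] at hsumδ
    linarith
  have hsub : ∑ j ∈ Finset.univ.erase i₀, |δ j| ≤ (m : ℝ) / N := by
    have h1 : ∑ j ∈ Finset.univ.erase i₀, |δ j|
        ≤ ∑ _j ∈ Finset.univ.erase i₀, 1 / (N : ℝ) := by
      refine Finset.sum_le_sum fun j hj => hδ1 j (Finset.ne_of_mem_erase hj)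
    have h2 : ∑ _j ∈ Finset.univ.erase i₀, 1 / (N : ℝ)
        = ((Finset.univ.erase i₀).card : ℝ) * (1 / N) := by
      rw [Finset.sum_const, nsmul_eq_mul]
    have h3 : ((Finset.univ.erase i₀).card : ℝ) ≤ (m : ℝ) := by
      have := Finset.card_erase_le (s := (Finset.univ : Finset {y : Fin d → ℝ // y ∈ sF})) (a := i₀)
      have hcu : (Finset.univ : Finset {y : Fin d → ℝ // y ∈ sF}).card = m := Finset.card_univ
      exact_mod_cast hcu ▸ this
    rw [h2] at h1
    calc ∑ j ∈ Finset.univ.erase i₀, |δ j| ≤ ((Finset.univ.erase i₀).card : ℝ) * (1 / N) := h1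
      _ ≤ (m : ℝ) * (1 / N) := by
          refine mul_le_mul_of_nonneg_right h3 (by positivity)
      _ = (m : ℝ) / N := by ring
  have hδtot : ∑ i, |δ i| ≤ ε := by
    rw [← Finset.add_sum_erase _ (fun i => |δ i|) (Finset.mem_univ i₀)]
    have h0 : |δ i₀| ≤ (m : ℝ) / N := by
      rw [hδ0, abs_neg]
      exact (Finset.abs_sum_le_sum_abs _ _).trans hsub
    have : (m : ℝ) / N + (m : ℝ) / N = (2 * m : ℝ) / N := by ring
    linarith
  -- build the permutation
  have hcard : Fintype.card (Fin N) = Fintype.card (Σ i : {y : Fin d → ℝ // y ∈ sF}, Fin (k i)) := by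
    simp only [Fintype.card_fin, Fintype.card_sigma]
    exact hksum.symm
  set e : Fin N ≃ Σ i : {y : Fin d → ℝ // y ∈ sF}, Fin (k i) := Fintype.equivOfCardEq hcard with he
  refine ⟨N, hN0, Equiv.prodCongrLeft (fun j : Fin N => ((P (e j).1)⁻¹ : Equiv.Perm (Fin d))), ?_⟩
  have hπsymm : ∀ (i : Fin d) (j : Fin N),
      (((Equiv.prodCongrLeft fun j : Fin N => ((P (e j).1)⁻¹ : Equiv.Perm (Fin d))).symm
        (i, j)).1 : Fin d) = P (e j).1 i := by
    intro i j
    have h : ((Equiv.prodCongrLeft fun j : Fin N => ((P (e j).1)⁻¹ : Equiv.Perm (Fin d))).symm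
        (i, j)) = (P (e j).1 i, j) := by
      rw [Equiv.symm_apply_eq, Equiv.prodCongrLeft_apply]
      simp
    rw [h]
  have hr : ∀ i : Fin d,
      (∑ j : Fin N, p (((Equiv.prodCongrLeft fun j : Fin N =>
          ((P (e j).1)⁻¹ : Equiv.Perm (Fin d))).symm (i, j)).1) / N)
        = ∑ a, ((k a : ℝ) / N) * p (P a i) := by
    intro i
    have h1 : ∀ j : Fin N,
        p (((Equiv.prodCongrLeft fun j : Fin N =>
          ((P (e j).1)⁻¹ : Equiv.Perm (Fin d))).symm (i, j)).1) / N
          = p (P (e j).1 i) / N := by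
      intro j; rw [hπsymm]
    rw [Finset.sum_congr rfl (fun j _ => h1 j), ← Finset.sum_div]
    have h2 : ∑ j : Fin N, p (P (e j).1 i)
        = ∑ x : Σ a : {y : Fin d → ℝ // y ∈ sF}, Fin (k a), p (P x.1 i) :=
      Equiv.sum_comp e (fun x => p (P x.1 i))
    have h3 : ∑ x : Σ a : {y : Fin d → ℝ // y ∈ sF}, Fin (k a), p (P x.1 i)
        = ∑ a, (k a : ℝ) * p (P a i) := by
      rw [← Finset.univ_sigma_univ, Finset.sum_sigma]
      refine Finset.sum_congr rfl fun a _ => ?_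
      simp [Finset.sum_const, Finset.card_univ, Fintype.card_fin, nsmul_eq_mul]
    rw [h2, h3, Finset.sum_div]
    refine Finset.sum_congr rfl fun a _ => ?_
    ring
  calc ∑ i : Fin d, |(∑ j : Fin N, p (((Equiv.prodCongrLeft fun j : Fin N =>
          ((P (e j).1)⁻¹ : Equiv.Perm (Fin d))).symm (i, j)).1) / N) - q i|
      = ∑ i : Fin d, |∑ a, δ a * p (P a i)| := by
        refine Finset.sum_congr rfl fun i _ => ?_
        rw [hr i, hqW i, ← Finset.sum_sub_distrib]
        congr 1
        refine Finset.sum_congr rfl fun a _ => ?_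
        rw [hδdef]
        ring
    _ ≤ ∑ i : Fin d, ∑ a, |δ a| * p (P a i) := by
        refine Finset.sum_le_sum fun i _ => ?_
        refine (Finset.abs_sum_le_sum_abs _ _).trans ?_
        refine Finset.sum_le_sum fun a _ => ?_
        rw [abs_mul, abs_of_nonneg (hp.1 _)]
    _ = ∑ a, |δ a| * ∑ i : Fin d, p (P a i) := by
        rw [Finset.sum_comm]
        refine Finset.sum_congr rfl fun a _ => ?_
        rw [Finset.mul_sum]
    _ = ∑ a, |δ a| := by
        refine Finset.sum_congr rfl fun a _ => ?_
        rw [Equiv.sum_comp (P a) p, hp.2, mul_one]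
    _ ≤ ε := hδtot
end

section
/- (Mixed-to-pure rate upper bound via monotones) Suppose f is a nonnegative function on probability distributions such that f is nonincreasing under doubly stochastic maps composed with adding uniform ancillas and marginalization, f is additive on products, and f satisfies |f(p) - f(q)| ≤ m·g(‖p-q‖₁) for distributions on 2^m points with g(x) → 0 as x → 0. If there is a sequence of such allowed maps Λ_n taking p^⊗n to within trace distance ε_n → 0 of δ^⊗m_n (the point mass on m_n bits), then limsup m_n/n ≤ f(p)/f(δ), where δ is the point mass on one bit (assuming f(δ) > 0). -/
open Filter

/-- The `n`-fold product of a distribution `p` on `N` bits, as a distribution on `N*n` bits. -/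
noncomputable def prodDist (N n : ℕ) (p : Fin (2 ^ N) → ℝ) : Fin (2 ^ (N * n)) → ℝ :=
  fun x => ∏ i : Fin n,
    p (finFunctionFinEquiv.symm (Fin.cast (by rw [pow_mul]) x) i)

/-- The point mass (deterministic distribution) on `m` bits. -/
noncomputable def pointMass (m : ℕ) : Fin (2 ^ m) → ℝ :=
  fun x => if (x : ℕ) = 0 then 1 else 0

lemma pointMass_isProbDist (m : ℕ) : IsProbDist (pointMass m) := by
  constructor
  · intro i
    unfold pointMass
    positivity
  · haveI : NeZero (2 ^ m) := ⟨by positivity⟩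
    have : ∀ x : Fin (2 ^ m), pointMass m x = if x = 0 then 1 else 0 := by
      intro x
      unfold pointMass
      simp only [Fin.val_eq_zero_iff]
    simp_rw [this]
    simp

/-- Monotones bound transition rates: if `f` is nonnegative on distributions, additive
on products, asymptotically continuous, and nonincreasing along the allowed protocol
maps `Λ_n` (whose outputs are the `q n`), and the protocol takes `p^⊗n` to within trace
distance `ε_n → 0` of the point mass on `m_n` bits, then
`limsup m_n/n ≤ f(p)/f(δ)`. -/
theorem monotone_bounds_mixed_to_pure_rate
    (f : ∀ m : ℕ, (Fin (2 ^ m) → ℝ) → ℝ)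
    (hf_nonneg : ∀ m (r : Fin (2 ^ m) → ℝ), IsProbDist r → 0 ≤ f m r)
    (g : ℝ → ℝ) (hg : Tendsto g (nhds 0) (nhds 0))
    (hf_cont : ∀ m (r s : Fin (2 ^ m) → ℝ), IsProbDist r → IsProbDist s →
      |f m r - f m s| ≤ (m : ℝ) * g (∑ i, |r i - s i|))
    (N : ℕ) (p : Fin (2 ^ N) → ℝ) (hp : IsProbDist p)
    (hf_add_p : ∀ n, f (N * n) (prodDist N n p) = n * f N p)
    (hf_add_δ : ∀ m, f m (pointMass m) = m * f 1 (pointMass 1))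
    (m : ℕ → ℕ) (q : ∀ n, Fin (2 ^ m n) → ℝ) (hq : ∀ n, IsProbDist (q n))
    (hmono : ∀ n, f (m n) (q n) ≤ f (N * n) (prodDist N n p))
    (ε : ℕ → ℝ) (hε0 : ∀ n, 0 ≤ ε n) (hε : Tendsto ε atTop (nhds 0))
    (hclose : ∀ n, ∑ i, |q n i - pointMass (m n) i| ≤ ε n)
    (hδpos : 0 < f 1 (pointMass 1)) :
    Filter.limsup (fun n => (m n : ℝ) / n) atTop ≤ f N p / f 1 (pointMass 1) := by
  set fδ := f 1 (pointMass 1) with hfδ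
  set fp := f N p with hfp
  set d : ℕ → ℝ := fun n => ∑ i, |q n i - pointMass (m n) i| with hd_def
  have hd0 : ∀ n, 0 ≤ d n := fun n => Finset.sum_nonneg fun i _ => abs_nonneg _
  have hd : Tendsto d atTop (nhds 0) :=
    tendsto_of_tendsto_of_tendsto_of_le_of_le tendsto_const_nhds hε hd0 hclose
  have hgd : Tendsto (fun n => g (d n)) atTop (nhds 0) := hg.comp hd
  -- main inequality: (m n) * (fδ - g (d n)) ≤ n * fp
  have key : ∀ n, (m n : ℝ) * (fδ - g (d n)) ≤ (n : ℝ) * fp := by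
    intro n
    have h1 := hf_cont (m n) (q n) (pointMass (m n)) (hq n) (pointMass_isProbDist (m n))
    have h2 : f (m n) (pointMass (m n)) - f (m n) (q n) ≤ (m n : ℝ) * g (d n) := by
      have := abs_le.mp h1
      linarith [this.1]
    have h3 : f (m n) (q n) ≤ (n : ℝ) * fp := by
      have := hmono n
      rw [hf_add_p n] at this
      exact this
    have h4 : f (m n) (pointMass (m n)) = (m n : ℝ) * fδ := hf_add_δ (m n)
    nlinarith
  -- fδ - g(d n) > 0 eventually
  have hev : ∀ᶠ n in atTop, 0 < fδ - g (d n) := by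
    have : Tendsto (fun n => fδ - g (d n)) atTop (nhds (fδ - 0)) :=
      tendsto_const_nhds.sub hgd
    rw [sub_zero] at this
    exact this.eventually_const_lt hδpos |>.mono fun n h => h
  have hfp0 : 0 ≤ fp := hf_nonneg N p hp
  have hratio : Tendsto (fun n => fp / (fδ - g (d n))) atTop (nhds (fp / fδ)) := by
    have h1 : Tendsto (fun n => fδ - g (d n)) atTop (nhds (fδ - 0)) :=
      tendsto_const_nhds.sub hgd
    rw [sub_zero] at h1
    exact tendsto_const_nhds.div h1 (ne_of_gt hδpos)
  refine le_of_forall_pos_le_add fun c hc => ?_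
  have hev2 : ∀ᶠ n in atTop, (m n : ℝ) / n ≤ fp / fδ + c := by
    have hev3 : ∀ᶠ n in atTop, fp / (fδ - g (d n)) ≤ fp / fδ + c := by
      have : Tendsto (fun n => fp / (fδ - g (d n))) atTop (nhds (fp / fδ)) := hratio
      exact this.eventually_le_const (by linarith)
    filter_upwards [hev, hev3, eventually_gt_atTop 0] with n h1 h2 h3
    have hn : (0 : ℝ) < n := by exact_mod_cast h3
    have : (m n : ℝ) / n ≤ fp / (fδ - g (d n)) := by
      rw [div_le_div_iff₀ hn h1]
      nlinarith [key n]
    linarith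
  refine Filter.limsup_le_of_le ?_ hev2
  refine ⟨0, fun a ha => ?_⟩
  obtain ⟨n, hn⟩ := (eventually_map.1 ha).exists
  exact le_trans (by positivity) hn
end

section
/- (Entanglement/type-class concentration yield) Let p = (a², b²) be a distribution on two symbols, and perform on p^⊗n the measurement of the number k of zeros, projecting onto a type class of size C(n,k) with probability p_k = C(n,k) a^{2k} b^{2(n-k)}; the resulting conditional distribution is uniform on C(n,k) points. Then the expected yield (1/n)·(Σ_k p_k (n - log₂ C(n,k)) - H({p_k})) converges to 1 - H(a²) as n → ∞. -/
open Filter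

private lemma sum_binom_aux (q r : ℝ) (hqr : q + r = 1) (n : ℕ) :
    ∑ k ∈ Finset.range (n + 1), (n.choose k : ℝ) * q ^ k * r ^ (n - k) = 1 := by
  have h := add_pow q r n
  rw [hqr, one_pow] at h
  rw [h]
  exact Finset.sum_congr rfl fun k _ => by ring

private lemma sum_binom_mean_aux (q r : ℝ) (hqr : q + r = 1) (n : ℕ) :
    ∑ k ∈ Finset.range (n + 1),
      (k : ℝ) * ((n.choose k : ℝ) * q ^ k * r ^ (n - k)) = n * q := by
  cases n with
  | zero => simp
  | succ m =>
    rw [Finset.sum_range_succ']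
    simp only [Nat.cast_zero, zero_mul, add_zero]
    have keyn : ∀ k, (k + 1) * (m + 1).choose (k + 1) = (m + 1) * m.choose k := by
      intro k
      rw [mul_comm, ← Nat.add_one_mul_choose_eq]
    have key : ∀ k : ℕ, ((k + 1 : ℕ) : ℝ) * (((m + 1).choose (k + 1) : ℕ) : ℝ)
        = ((m + 1 : ℕ) : ℝ) * ((m.choose k : ℕ) : ℝ) := by
      intro k
      exact_mod_cast congrArg (Nat.cast : ℕ → ℝ) (keyn k)
    have step : ∑ k ∈ Finset.range (m + 1),
        ((k + 1 : ℕ) : ℝ) * (((m + 1).choose (k + 1) : ℝ) * q ^ (k + 1) * r ^ (m + 1 - (k + 1)))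
        = ((m + 1 : ℕ) : ℝ) * q *
          ∑ k ∈ Finset.range (m + 1), (m.choose k : ℝ) * q ^ k * r ^ (m - k) := by
      rw [Finset.mul_sum]
      refine Finset.sum_congr rfl fun k hk => ?_
      have hsub : m + 1 - (k + 1) = m - k := by omega
      rw [hsub]
      have hkey := key k
      push_cast at hkey ⊢
      linear_combination (q ^ (k + 1) * r ^ (m - k)) * hkey
    rw [step, sum_binom_aux q r hqr m, mul_one]

private lemma pk_log_aux (q r : ℝ) (n k : ℕ) (hk : k ≤ n) :
    (n.choose k : ℝ) * q ^ k * r ^ (n - k) *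
      Real.logb 2 ((n.choose k : ℝ) * q ^ k * r ^ (n - k))
    = (n.choose k : ℝ) * q ^ k * r ^ (n - k) *
      (Real.logb 2 (n.choose k) + (k : ℝ) * Real.logb 2 q
        + ((n : ℝ) - (k : ℝ)) * Real.logb 2 r) := by
  by_cases h : (n.choose k : ℝ) * q ^ k * r ^ (n - k) = 0
  · rw [h]; ring
  · have hc : (n.choose k : ℝ) ≠ 0 := fun h' => h (by rw [h']; ring)
    have hqk : q ^ k ≠ 0 := fun h' => h (by rw [h']; ring)
    have hrk : r ^ (n - k) ≠ 0 := fun h' => h (by rw [h']; ring)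
    rw [Real.logb_mul (mul_ne_zero hc hqk) hrk, Real.logb_mul hc hqk,
      Real.logb_pow, Real.logb_pow]
    have : ((n - k : ℕ) : ℝ) = (n : ℝ) - (k : ℝ) := by
      rw [Nat.cast_sub hk]
    rw [this]

/-- Concentration yield: measuring the number of zeros on `p^⊗n` with
`p = (a², b²)` projects with probability `p_k = C(n,k) a^{2k} b^{2(n-k)}` onto a type
class uniform on `C(n,k)` points, yielding `n - log₂ C(n,k)` pure bits; the expected
yield per copy, minus the erasure cost `H({p_k})/n`, converges to `1 - H(a²)`. -/
theorem type_class_concentration_yield (a b : ℝ) (ha : 0 ≤ a) (hb : 0 ≤ b)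
    (hab : a ^ 2 + b ^ 2 = 1)
    (pk : ℕ → ℕ → ℝ)
    (hpk : ∀ n k, pk n k = (n.choose k : ℝ) * a ^ (2 * k) * b ^ (2 * (n - k))) :
    Tendsto
      (fun n : ℕ =>
        ((∑ k ∈ Finset.range (n + 1),
            pk n k * ((n : ℝ) - Real.logb 2 (n.choose k))) -
          (-∑ k ∈ Finset.range (n + 1), pk n k * Real.logb 2 (pk n k))) / n)
      atTop
      (nhds (1 - (-(a ^ 2 * Real.logb 2 (a ^ 2)) - b ^ 2 * Real.logb 2 (b ^ 2)))) := by
  set q := a ^ 2 with hq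
  set r := b ^ 2 with hr
  set lq := Real.logb 2 q with hlq
  set lr := Real.logb 2 r with hlr
  have hqr : q + r = 1 := hab
  have hconst : ∀ n : ℕ, 1 ≤ n →
      ((∑ k ∈ Finset.range (n + 1),
          pk n k * ((n : ℝ) - Real.logb 2 (n.choose k))) -
        (-∑ k ∈ Finset.range (n + 1), pk n k * Real.logb 2 (pk n k))) / n
      = 1 + q * lq + r * lr := by
    intro n hn
    have hpk' : ∀ k, pk n k = (n.choose k : ℝ) * q ^ k * r ^ (n - k) := by
      intro k
      rw [hpk, pow_mul, pow_mul]
    have hsum : ((∑ k ∈ Finset.range (n + 1),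
          pk n k * ((n : ℝ) - Real.logb 2 (n.choose k))) -
        (-∑ k ∈ Finset.range (n + 1), pk n k * Real.logb 2 (pk n k)))
        = ∑ k ∈ Finset.range (n + 1),
            ((n : ℝ) * pk n k + lq * ((k : ℝ) * pk n k)
              + (lr * (n : ℝ)) * pk n k - lr * ((k : ℝ) * pk n k)) := by
      rw [sub_neg_eq_add, ← Finset.sum_add_distrib]
      refine Finset.sum_congr rfl fun k hk => ?_
      have hk' : k ≤ n := Nat.lt_succ_iff.mp (Finset.mem_range.mp hk)
      rw [hpk' k, pk_log_aux q r n k hk']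
      ring
    have hs0 : ∑ k ∈ Finset.range (n + 1), pk n k = 1 := by
      simp only [hpk']
      exact sum_binom_aux q r hqr n
    have hs1 : ∑ k ∈ Finset.range (n + 1), (k : ℝ) * pk n k = n * q := by
      simp only [hpk']
      exact sum_binom_mean_aux q r hqr n
    rw [hsum, Finset.sum_sub_distrib, Finset.sum_add_distrib, Finset.sum_add_distrib,
      ← Finset.mul_sum, ← Finset.mul_sum, ← Finset.mul_sum, ← Finset.mul_sum,
      hs0, hs1]
    have hn0 : (n : ℝ) ≠ 0 := by positivity
    field_simp
    have hab2 : a ^ 2 + b ^ 2 = 1 := by rw [← hq, ← hr]; exact hqr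
    linear_combination (-lr) * hab2
  have hgoal : (1 : ℝ) - (-(q * lq) - r * lr) = 1 + q * lq + r * lr := by ring
  rw [hgoal]
  refine Tendsto.congr' ?_ tendsto_const_nhds
  filter_upwards [eventually_ge_atTop 1] with n hn
  exact (hconst n hn).symm
end
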